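/- For every natural number k and every i with 0 \le i \le k, the number of directed paths in the action graph A_k whose initial vertex is labeled i and whose terminal vertex is labeled k (counting trivial paths when i = k) equals C_i \cdot C_{k-i}, where C_n denotes the nth Catalan number. -/

import Mathlib

/-- Vertices of action graphs: the root (labeled 0), or a vertex created at some
step, recorded together with its label and the path (head and tail of the vertex
sequence) that created it. -/
inductive AGVert : Type
  | root : AGVert
  | node (lbl : ℕ) (head : AGVert) (tail : List AGVert) : AGVert

/-- The label of a vertex. -/
def AGVert.label : AGVert → ℕ
  | .root => 0
  | .node l _ _ => l

/-- `IsPath E a l` says that `a :: l` is the vertex sequence of a directed path in a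
graph with edge set `E` (the trivial path at `a` when `l = []`). -/
def IsPath (E : Set (AGVert × AGVert)) (a : AGVert) (l : List AGVert) : Prop :=
  List.Chain (fun x y => (x, y) ∈ E) a l

/-- The terminal vertex of the path with vertex sequence `a :: l`. -/
def pathLast (a : AGVert) (l : List AGVert) : AGVert :=
  (a :: l).getLast (List.cons_ne_nil a l)

/-- The action graph `A k`, given by its set of vertices together with its set of
(nontrivial, directed) edges.  `A 0` has one vertex (labeled 0) and no nontrivial
edges; `A (k+1)` is obtained from `A k` by adjoining, for each directed path
(including trivial ones) in `A k` whose terminal vertex is labeled `k`, a new vertex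
labeled `k+1` and a new edge from the initial vertex of the path to the new vertex. -/
def actionGraph : ℕ → Set AGVert × Set (AGVert × AGVert)
  | 0 => ({AGVert.root}, ∅)
  | k + 1 =>
    let G := actionGraph k
    (G.1 ∪ { w | ∃ a l, a ∈ G.1 ∧ IsPath G.2 a l ∧ (pathLast a l).label = k ∧
        w = AGVert.node (k + 1) a l },
     G.2 ∪ { e | ∃ a l, a ∈ G.1 ∧ IsPath G.2 a l ∧ (pathLast a l).label = k ∧
        e = (a, AGVert.node (k + 1) a l) })

/-! Every edge of `A k` increases the label, and the vertices labeled `k + 1` are in bijection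
with the paths of `A k` ending at label `k`. Hence a path of `A (k + 1)` from `u` to label `k + 1`
is a path of `A k` from `u` to some vertex `x`, followed by the new edge coming from a path of
`A k` from `x` to label `k`. By induction on `k` the number of paths from `u` to label `j` is
`C (j - label u)`, the Catalan convolution closing the induction step. The same decomposition
shows that `A k` has `C j` vertices labeled `j ≤ k`, and a path from label `i` to label `k` is a
vertex labeled `i` together with a path from it to label `k`. -/

namespace Set

variable {α β : Type*}

lemma Finite.setOf_length_le_forall_mem {s : Set α} (hs : s.Finite) (n : ℕ) :
    {l : List α | l.length ≤ n ∧ ∀ x ∈ l, x ∈ s}.Finite := by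
  have := hs.to_subtype
  refine ((List.finite_length_le s n).image (List.map Subtype.val)).subset ?_
  rintro l ⟨hn, hl⟩
  lift l to List s using hl
  exact ⟨l, by simpa using hn, rfl⟩

def dependentProd (A : Set α) (F : α → Set β) : Set (α × β) :=
  {p | p.1 ∈ A ∧ p.2 ∈ F p.1}

lemma dependentProd_eq_biUnion (A : Set α) (F : α → Set β) :
    dependentProd A F = ⋃ a ∈ A, Prod.mk a '' F a := by
  ext ⟨a, b⟩
  simp [dependentProd, and_comm]

lemma Finite.dependentProd {A : Set α} {F : α → Set β} (hA : A.Finite)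
    (hF : ∀ a ∈ A, (F a).Finite) : (A.dependentProd F).Finite := by
  rw [dependentProd_eq_biUnion]
  exact hA.biUnion fun a ha => (hF a ha).image _

lemma ncard_dependentProd_of_ncard_eq {A : Set α} {F : α → Set β} {c : ℕ} (hA : A.Finite)
    (hF : ∀ a ∈ A, (F a).Finite) (hc : ∀ a ∈ A, (F a).ncard = c) :
    (A.dependentProd F).ncard = A.ncard * c := by
  have hdisj : A.PairwiseDisjoint fun a => Prod.mk a '' F a := by
    intro a _ a' _ hne
    simp only [Function.onFun, disjoint_left, mem_image]
    rintro _ ⟨b, -, rfl⟩ ⟨b', -, hb'⟩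
    exact hne (congrArg Prod.fst hb').symm
  rw [dependentProd_eq_biUnion, hA.ncard_biUnion (fun a ha => (hF a ha).image _) hdisj,
    finsum_mem_congr rfl fun a ha =>
      (ncard_image_of_injective _ (Prod.mk_right_injective a)).trans (hc a ha),
    finsum_mem_eq_finite_toFinset_sum _ hA, Finset.sum_const, smul_eq_mul,
    ncard_eq_toFinset_card A hA]

lemma ncard_dependentProd_eq_sum {A : Set α} {F : α → Set β} (f : α → ℕ) (c : ℕ → ℕ)
    {n : ℕ} (hA : A.Finite) (hF : ∀ a ∈ A, (F a).Finite) (hf : ∀ a ∈ A, f a ≤ n)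
    (hc : ∀ a ∈ A, (F a).ncard = c (f a)) :
    (A.dependentProd F).ncard =
      ∑ j ∈ Finset.range (n + 1), {a ∈ A | f a = j}.ncard * c j := by
  have hsplit : A.dependentProd F = ⋃ j ∈ (Finset.range (n + 1) : Set ℕ),
      {a ∈ A | f a = j}.dependentProd F := by
    ext ⟨a, b⟩
    simp only [dependentProd, mem_iUnion, mem_ofPred_eq, Finset.coe_range, mem_Iio, exists_prop]
    exact ⟨fun h => ⟨f a, Nat.lt_succ_of_le (hf a h.1), ⟨h.1, rfl⟩, h.2⟩,
      fun ⟨_, _, ⟨ha, _⟩, hb⟩ => ⟨ha, hb⟩⟩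
  have hdisj : (Finset.range (n + 1) : Set ℕ).PairwiseDisjoint
      fun j => {a ∈ A | f a = j}.dependentProd F := by
    intro j _ j' _ hne
    simp only [Function.onFun, disjoint_left]
    rintro p ⟨⟨-, rfl⟩, -⟩ ⟨⟨-, h⟩, -⟩
    exact hne h
  rw [hsplit, (Finset.finite_toSet _).ncard_biUnion
      (fun j _ => (hA.subset (sep_subset _ _)).dependentProd fun a ha => hF a ha.1) hdisj,
    finsum_mem_coe_finset]
  refine Finset.sum_congr rfl fun j _ => ?_
  exact ncard_dependentProd_of_ncard_eq (hA.subset (sep_subset _ _)) (fun a ha => hF a ha.1)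
    fun a ha => ha.2 ▸ hc a ha.1

end Set

lemma catalan_succ_eq_sum_range (n : ℕ) :
    catalan (n + 1) = ∑ t ∈ Finset.range (n + 1), catalan t * catalan (n - t) :=
  (catalan_succ n).trans (Fin.sum_univ_eq_sum_range (fun t => catalan t * catalan (n - t)) _)

section Paths

variable {E : Set (AGVert × AGVert)} {a b : AGVert} {l : List AGVert}

@[simp] lemma pathLast_nil (a : AGVert) : pathLast a [] = a := rfl

@[simp] lemma pathLast_cons (a b : AGVert) (l : List AGVert) :
    pathLast a (b :: l) = pathLast b l :=
  List.getLast_cons_cons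

@[simp] lemma pathLast_concat (a b : AGVert) (l : List AGVert) : pathLast a (l ++ [b]) = b := by
  simp [pathLast]

lemma isPath_nil (E : Set (AGVert × AGVert)) (a : AGVert) : IsPath E a [] :=
  List.isChain_singleton a

lemma isPath_cons : IsPath E a (b :: l) ↔ (a, b) ∈ E ∧ IsPath E b l :=
  List.isChain_cons_cons

lemma isPath_concat : IsPath E a (l ++ [b]) ↔ IsPath E a l ∧ (pathLast a l, b) ∈ E := by
  induction l generalizing a with
  | nil => simp [isPath_cons, isPath_nil]
  | cons c l ih => simp only [List.cons_append, isPath_cons, ih, pathLast_cons, and_assoc]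

lemma IsPath.mono {E' : Set (AGVert × AGVert)} (hE : E ⊆ E') (hl : IsPath E a l) :
    IsPath E' a l :=
  List.IsChain.imp (fun _ _ h => hE h) hl

end Paths

section ActionGraph

variable {k : ℕ} {u v : AGVert} {l : List AGVert}

lemma mem_actionGraph_succ_fst : v ∈ (actionGraph (k + 1)).1 ↔ v ∈ (actionGraph k).1 ∨
    ∃ a l, a ∈ (actionGraph k).1 ∧ IsPath (actionGraph k).2 a l ∧
      (pathLast a l).label = k ∧ v = AGVert.node (k + 1) a l :=
  Iff.rfl

lemma mem_actionGraph_succ_snd {e : AGVert × AGVert} : e ∈ (actionGraph (k + 1)).2 ↔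
    e ∈ (actionGraph k).2 ∨ ∃ a l, a ∈ (actionGraph k).1 ∧
      IsPath (actionGraph k).2 a l ∧ (pathLast a l).label = k ∧
        e = (a, AGVert.node (k + 1) a l) :=
  Iff.rfl

lemma label_le_of_mem_actionGraph (hv : v ∈ (actionGraph k).1) : v.label ≤ k := by
  induction k with
  | zero => rw [show v = .root from hv]; rfl
  | succ k ih =>
    rcases mem_actionGraph_succ_fst.1 hv with hv | ⟨a, l, -, -, -, rfl⟩
    · exact (ih hv).trans k.le_succ
    · exact le_rfl

lemma mem_actionGraph_of_label_le (hv : v ∈ (actionGraph (k + 1)).1) (hk : v.label ≤ k) :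
    v ∈ (actionGraph k).1 := by
  rcases mem_actionGraph_succ_fst.1 hv with hv | ⟨a, l, -, -, -, rfl⟩
  · exact hv
  · exact absurd hk (Nat.not_succ_le_self k)

lemma mem_actionGraph_and_label_lt_of_edge {e : AGVert × AGVert} (h : e ∈ (actionGraph k).2) :
    e.1 ∈ (actionGraph k).1 ∧ e.2 ∈ (actionGraph k).1 ∧ e.1.label < e.2.label := by
  induction k with
  | zero => exact h.elim
  | succ k ih =>
    rcases mem_actionGraph_succ_snd.1 h with h | ⟨a, l, ha, hl, hal, rfl⟩
    · obtain ⟨hx, hy, hxy⟩ := ih h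
      exact ⟨Or.inl hx, Or.inl hy, hxy⟩
    · exact ⟨Or.inl ha, Or.inr ⟨a, l, ha, hl, hal, rfl⟩,
        Nat.lt_succ_of_le (label_le_of_mem_actionGraph ha)⟩

lemma IsPath.label_add_length_le (hl : IsPath (actionGraph k).2 u l) :
    u.label + l.length ≤ (pathLast u l).label := by
  induction l generalizing u with
  | nil => simp
  | cons b l ih =>
    obtain ⟨hub, hl⟩ := isPath_cons.1 hl
    have hub : u.label < b.label := (mem_actionGraph_and_label_lt_of_edge hub).2.2
    have := ih hl
    simp only [List.length_cons, pathLast_cons]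
    omega

lemma IsPath.forall_mem_actionGraph (hl : IsPath (actionGraph k).2 u l) :
    ∀ x ∈ l, x ∈ (actionGraph k).1 := by
  induction l generalizing u with
  | nil => simp
  | cons b l ih =>
    obtain ⟨hub, hl⟩ := isPath_cons.1 hl
    exact List.forall_mem_cons.2 ⟨(mem_actionGraph_and_label_lt_of_edge hub).2.1, ih hl⟩

lemma IsPath.pathLast_mem (hu : u ∈ (actionGraph k).1) (hl : IsPath (actionGraph k).2 u l) :
    pathLast u l ∈ (actionGraph k).1 := by
  cases l with
  | nil => exact hu
  | cons b l => exact hl.forall_mem_actionGraph _ (List.getLast_mem _)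

lemma finite_isPath_of_finite (hV : (actionGraph k).1.Finite) (hu : u ∈ (actionGraph k).1) :
    {l | IsPath (actionGraph k).2 u l}.Finite := by
  refine (hV.setOf_length_le_forall_mem k).subset fun l hl => ⟨?_, hl.forall_mem_actionGraph⟩
  have := hl.label_add_length_le
  have := label_le_of_mem_actionGraph (hl.pathLast_mem hu)
  omega

lemma finite_actionGraph_fst (k : ℕ) : (actionGraph k).1.Finite := by
  induction k with
  | zero => exact Set.finite_singleton _
  | succ k ih =>
    refine ih.union ((ih.dependentProd fun a ha => finite_isPath_of_finite ih ha).image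
      (fun p => AGVert.node (k + 1) p.1 p.2) |>.subset ?_)
    rintro _ ⟨a, l, ha, hl, -, rfl⟩
    exact ⟨(a, l), ⟨ha, hl⟩, rfl⟩

lemma finite_isPath (hu : u ∈ (actionGraph k).1) : {l | IsPath (actionGraph k).2 u l}.Finite :=
  finite_isPath_of_finite (finite_actionGraph_fst k) hu

end ActionGraph

section Counting

variable {k j : ℕ} {u : AGVert}

def pathsFrom (k : ℕ) (u : AGVert) (j : ℕ) : Set (List AGVert) :=
  {l | IsPath (actionGraph k).2 u l ∧ (pathLast u l).label = j}

def verticesLabeled (k j : ℕ) : Set AGVert := {v ∈ (actionGraph k).1 | v.label = j}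

lemma finite_pathsFrom (hu : u ∈ (actionGraph k).1) (j : ℕ) : (pathsFrom k u j).Finite :=
  (finite_isPath hu).subset fun _ hl => hl.1

lemma IsPath.of_succ {l : List AGVert} (hl : IsPath (actionGraph (k + 1)).2 u l)
    (hk : (pathLast u l).label ≤ k) : IsPath (actionGraph k).2 u l := by
  induction l generalizing u with
  | nil => exact isPath_nil _ _
  | cons b l ih =>
    obtain ⟨hub, hl⟩ := isPath_cons.1 hl
    rw [pathLast_cons] at hk
    have hb : b.label ≤ k := (Nat.le_add_right _ _).trans (hl.label_add_length_le.trans hk)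
    refine isPath_cons.2 ⟨?_, ih hl hk⟩
    rcases mem_actionGraph_succ_snd.1 hub with hub | ⟨a, l', -, -, -, he⟩
    · exact hub
    · obtain ⟨-, rfl⟩ := Prod.mk.inj he
      exact absurd hb (Nat.not_succ_le_self k)

lemma pathsFrom_succ_of_le (hj : j ≤ k) : pathsFrom (k + 1) u j = pathsFrom k u j :=
  Set.ext fun _ => ⟨fun ⟨hl, hlj⟩ => ⟨hl.of_succ (hlj ▸ hj), hlj⟩,
    fun ⟨hl, hlj⟩ => ⟨hl.mono fun _ he => Or.inl he, hlj⟩⟩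

lemma verticesLabeled_succ_of_le (hj : j ≤ k) : verticesLabeled (k + 1) j = verticesLabeled k j :=
  Set.ext fun _ => ⟨fun ⟨hv, hvj⟩ => ⟨mem_actionGraph_of_label_le hv (hvj ▸ hj), hvj⟩,
    fun ⟨hv, hvj⟩ => ⟨Or.inl hv, hvj⟩⟩

lemma pathsFrom_self (hu : u.label = k) : pathsFrom k u k = {[]} := by
  ext l
  refine ⟨fun ⟨hl, hlk⟩ => ?_, ?_⟩
  · have := hl.label_add_length_le
    exact List.eq_nil_of_length_eq_zero (by omega)
  · rintro rfl
    exact ⟨isPath_nil _ _, hu⟩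

lemma pathsFrom_succ_self_eq_image (hu : u ∈ (actionGraph k).1) :
    pathsFrom (k + 1) u (k + 1) =
      (fun p => p.1 ++ [AGVert.node (k + 1) (pathLast u p.1) p.2]) ''
        {l | IsPath (actionGraph k).2 u l}.dependentProd fun l => pathsFrom k (pathLast u l) k := by
  ext L
  constructor
  · rintro ⟨hL, hLk⟩
    rcases L.eq_nil_or_concat with rfl | ⟨l, v, rfl⟩
    · have := label_le_of_mem_actionGraph hu
      rw [pathLast_nil] at hLk
      omega
    rw [List.concat_eq_append, isPath_concat] at hL
    rw [List.concat_eq_append, pathLast_concat] at hLk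
    obtain ⟨hl, hv⟩ := hL
    rcases mem_actionGraph_succ_snd.1 hv with hv | ⟨a, l', ha, hl', hal', he⟩
    · have : v.label ≤ k :=
        label_le_of_mem_actionGraph (mem_actionGraph_and_label_lt_of_edge hv).2.1
      omega
    obtain ⟨rfl, rfl⟩ := Prod.mk.inj he
    exact ⟨(l, l'), ⟨hl.of_succ (label_le_of_mem_actionGraph ha), hl', hal'⟩,
      List.concat_eq_append.symm⟩
  · rintro ⟨⟨l, l'⟩, ⟨hl, hl', hl'k⟩, rfl⟩
    refine ⟨isPath_concat.2 ⟨hl.mono fun _ he => Or.inl he, ?_⟩,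
      by rw [pathLast_concat]; rfl⟩
    exact Or.inr ⟨_, l', hl.pathLast_mem hu, hl', hl'k, rfl⟩

lemma ncard_pathsFrom_succ_self (hu : u ∈ (actionGraph k).1)
    (ih : ∀ x ∈ (actionGraph k).1, (pathsFrom k x k).ncard = catalan (k - x.label)) :
    (pathsFrom (k + 1) u (k + 1)).ncard = ∑ t ∈ Finset.range (k - u.label + 1),
      (pathsFrom k u (u.label + t)).ncard * catalan (k - u.label - t) := by
  have hinj : Function.Injective
      fun p : List AGVert × List AGVert => p.1 ++ [AGVert.node (k + 1) (pathLast u p.1) p.2] := by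
    rintro ⟨l, l'⟩ ⟨m, m'⟩ h
    obtain ⟨rfl, h'⟩ := List.append_inj' h rfl
    simp only [List.cons.injEq, AGVert.node.injEq] at h'
    rw [h'.1.2.2]
  rw [pathsFrom_succ_self_eq_image hu, Set.ncard_image_of_injective _ hinj,
    Set.ncard_dependentProd_eq_sum (fun l => (pathLast u l).label - u.label)
      (fun t => catalan (k - u.label - t)) (finite_isPath hu)
      (fun l hl => finite_pathsFrom (hl.pathLast_mem hu) k)
      (fun l hl => Nat.sub_le_sub_right (label_le_of_mem_actionGraph (hl.pathLast_mem hu)) _)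
      fun l hl => by
        have := hl.label_add_length_le
        rw [ih _ (hl.pathLast_mem hu)]
        congr 1
        omega]
  refine Finset.sum_congr rfl fun t _ => ?_
  congr 2
  ext l
  refine and_congr_right fun hl => ?_
  have := hl.label_add_length_le
  omega

theorem ncard_pathsFrom (hu : u ∈ (actionGraph k).1) (huj : u.label ≤ j) (hjk : j ≤ k) :
    (pathsFrom k u j).ncard = catalan (j - u.label) := by
  induction k generalizing u j with
  | zero =>
    obtain rfl : j = 0 := Nat.le_zero.1 hjk
    rw [pathsFrom_self (Nat.le_zero.1 huj), Set.ncard_singleton, Nat.zero_sub, catalan_zero]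
  | succ k ih =>
    rcases hjk.lt_or_eq with hjk | rfl
    · rw [pathsFrom_succ_of_le (Nat.le_of_lt_succ hjk)]
      exact ih (mem_actionGraph_of_label_le hu (by omega)) huj (Nat.le_of_lt_succ hjk)
    rcases huj.lt_or_eq with huk | huk
    · have hu' := mem_actionGraph_of_label_le hu (Nat.le_of_lt_succ huk)
      rw [ncard_pathsFrom_succ_self hu' fun x hx => ih hx (label_le_of_mem_actionGraph hx) le_rfl,
        show k + 1 - u.label = k - u.label + 1 by omega, catalan_succ_eq_sum_range]
      refine Finset.sum_congr rfl fun t ht => ?_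
      rw [ih hu' (Nat.le_add_right _ _) (by simp at ht; omega), Nat.add_sub_cancel_left]
    · rw [pathsFrom_self huk, Set.ncard_singleton, huk, Nat.sub_self, catalan_zero]

lemma verticesLabeled_succ_self_eq_image :
    verticesLabeled (k + 1) (k + 1) = (fun p => AGVert.node (k + 1) p.1 p.2) ''
      (actionGraph k).1.dependentProd fun a => pathsFrom k a k := by
  ext v
  constructor
  · rintro ⟨hv, hvk⟩
    rcases mem_actionGraph_succ_fst.1 hv with hv | ⟨a, l, ha, hl, hal, rfl⟩
    · have := label_le_of_mem_actionGraph hv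
      omega
    · exact ⟨(a, l), ⟨ha, hl, hal⟩, rfl⟩
  · rintro ⟨⟨a, l⟩, ⟨ha, hl, hal⟩, rfl⟩
    exact ⟨Or.inr ⟨a, l, ha, hl, hal, rfl⟩, rfl⟩

theorem ncard_verticesLabeled (hjk : j ≤ k) : (verticesLabeled k j).ncard = catalan j := by
  induction k generalizing j with
  | zero =>
    obtain rfl : j = 0 := Nat.le_zero.1 hjk
    have : verticesLabeled 0 0 = {AGVert.root} :=
      Set.ext fun v => ⟨fun hv => hv.1, fun hv => ⟨hv, by rw [show v = .root from hv]; rfl⟩⟩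
    rw [this, Set.ncard_singleton, catalan_zero]
  | succ k ih =>
    rcases hjk.lt_or_eq with hjk | rfl
    · rw [verticesLabeled_succ_of_le (Nat.le_of_lt_succ hjk), ih (Nat.le_of_lt_succ hjk)]
    have hinj : Function.Injective fun p : AGVert × List AGVert => AGVert.node (k + 1) p.1 p.2 :=
      fun _ _ h => Prod.ext (AGVert.node.inj h).2.1 (AGVert.node.inj h).2.2
    rw [verticesLabeled_succ_self_eq_image, Set.ncard_image_of_injective _ hinj,
      Set.ncard_dependentProd_eq_sum AGVert.label (fun i => catalan (k - i))
        (finite_actionGraph_fst k) (fun a ha => finite_pathsFrom ha k)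
        (fun a ha => label_le_of_mem_actionGraph ha)
        fun a ha => ncard_pathsFrom ha (label_le_of_mem_actionGraph ha) le_rfl,
      catalan_succ_eq_sum_range]
    exact Finset.sum_congr rfl fun i hi => by
      rw [← verticesLabeled, ih (Nat.le_of_lt_succ (Finset.mem_range.1 hi))]

end Counting

/-- For every `0 ≤ i ≤ k`, the number of directed paths in `A k` from a vertex labeled
`i` to a vertex labeled `k` (including trivial paths when `i = k`) is `C i * C (k-i)`. -/
theorem stmt_5 (k i : ℕ) (hik : i ≤ k) :
    {p : AGVert × List AGVert | p.1 ∈ (actionGraph k).1 ∧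
      IsPath (actionGraph k).2 p.1 p.2 ∧ p.1.label = i ∧
      (pathLast p.1 p.2).label = k}.ncard = catalan i * catalan (k - i) := by
  have hpaths : {p : AGVert × List AGVert | p.1 ∈ (actionGraph k).1 ∧
      IsPath (actionGraph k).2 p.1 p.2 ∧ p.1.label = i ∧ (pathLast p.1 p.2).label = k} =
      (verticesLabeled k i).dependentProd fun a => pathsFrom k a k := by
    ext p
    simp only [Set.dependentProd, verticesLabeled, pathsFrom, Set.mem_ofPred_eq]
    tauto
  rw [hpaths, Set.ncard_dependentProd_of_ncard_eq
      ((finite_actionGraph_fst k).subset fun _ ha => ha.1) (fun a ha => finite_pathsFrom ha.1 k)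
      fun a ha => ha.2 ▸ ncard_pathsFrom ha.1 (ha.2 ▸ hik) le_rfl,
    ncard_verticesLabeled hik]
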